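/- For u ∈ U let z = (L¹)^{−1}L^{qcf}u. Then z'_ℓ = σ(u')_ℓ − σ̄(u') + φ''_{2F}(α̃_{−K}(u') h_{−K,ℓ} − α̃_K(u') h_{K,ℓ}), where σ(u')_ℓ = φ''_F u'_ℓ + φ''_{2F}(u'_{ℓ−1} + 2u'_ℓ + u'_{ℓ+1}) for ℓ ∈ A' = {−K+1,…,K} and σ(u')_ℓ = (φ''_F + 4φ''_{2F})u'_ℓ for ℓ ∈ C' = {−N+1,…,N}∖A'; σ̄(u') = (ε/2)φ''_{2F}(u'_{K+1} − u'_K − u'_{−K+1} + u'_{−K}); α̃_{−K}(u') = u'_{−K+1} − 2u'_{−K} + u'_{−K−1}; α̃_K(u') = u'_{K+2} − 2u'_{K+1} + u'_K; and h_{±K} is as defined previously. -/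

import Mathlib

/-!
Let `G` be the claimed right-hand side. Both `z'` and `G` have forward differences
`-ε (L^{qcf} u)_ℓ`: for `z'` this is the equation `L¹ z = L^{qcf} u`, and for `G` it holds because
`L^{qcf} u` is minus the discrete divergence of `σ(u')` up to the ghost forces `φ''_{2F} α̃_{∓K}`
at the interfaces, which are cancelled by the unit jumps of `h_{∓K}` there. So `z' - G` is constant
on `{-N+1, …, N}`. Its sum vanishes, since `z` vanishes at `±N` and `σ̄` and `h_{±K}` are exactly
the normalisations giving `G` mean zero; hence `z' = G`.
-/

/-- Discrete Dirichlet Laplacian. -/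
noncomputable def L1 (ε : ℝ) (v : ℤ → ℝ) (j : ℤ) : ℝ :=
  (-v (j + 1) + 2 * v j - v (j - 1)) / ε ^ 2

/-- Linearized atomistic operator. -/
noncomputable def La (ε φF φ2F : ℝ) (v : ℤ → ℝ) (j : ℤ) : ℝ :=
  φF * ((-v (j + 1) + 2 * v j - v (j - 1)) / ε ^ 2)
    + φ2F * ((-v (j + 2) + 2 * v j - v (j - 2)) / ε ^ 2)

/-- Linearized force-based QC operator. -/
noncomputable def Lqcf (K : ℕ) (ε φF φ2F : ℝ) (v : ℤ → ℝ) (j : ℤ) : ℝ :=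
  if |j| ≤ (K : ℤ) then La ε φF φ2F v j else (φF + 4 * φ2F) * L1 ε v j

/-- Discrete derivative (strain). -/
noncomputable def du (ε : ℝ) (u : ℤ → ℝ) (ℓ : ℤ) : ℝ := (u ℓ - u (ℓ - 1)) / ε

/-- The stress σ(u') of the QCF operator. -/
noncomputable def sigmaQcf (K : ℕ) (ε φF φ2F : ℝ) (u : ℤ → ℝ) (ℓ : ℤ) : ℝ :=
  if -(K : ℤ) + 1 ≤ ℓ ∧ ℓ ≤ (K : ℤ) then
    φF * du ε u ℓ + φ2F * (du ε u (ℓ - 1) + 2 * du ε u ℓ + du ε u (ℓ + 1))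
  else (φF + 4 * φ2F) * du ε u ℓ

/-- The discrete delta representation vector h_{K}. -/
noncomputable def hplus (K : ℕ) (ε : ℝ) (ℓ : ℤ) : ℝ :=
  if ℓ ≤ (K : ℤ) then (1 - ε * K) / 2 else (-1 - ε * K) / 2

/-- The discrete delta representation vector h_{−K}. -/
noncomputable def hminus (K : ℕ) (ε : ℝ) (ℓ : ℤ) : ℝ :=
  if ℓ ≤ -(K : ℤ) then (1 + ε * K) / 2 else (-1 + ε * K) / 2

open Finset

section Telescoping

variable {M : Type*} [AddCommGroup M]

theorem sum_Ioc_sub_pred (f : ℤ → M) {a b : ℤ} (hab : a ≤ b) :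
    ∑ ℓ ∈ Ioc a b, (f ℓ - f (ℓ - 1)) = f b - f a := by
  induction b, hab using Int.leInduction with
  | base => simp
  | succ b hab ih =>
    rw [← insert_Ioc_right_eq_Ioc_add_one hab, sum_insert (by simp), ih, add_sub_cancel_right]
    abel

theorem eqOn_Ioc_of_succ_sub_eq_of_sum_eq [IsAddTorsionFree M] {f g : ℤ → M} {a b : ℤ}
    (hstep : ∀ m ∈ Ioo a b, f (m + 1) - f m = g (m + 1) - g m)
    (hsum : ∑ m ∈ Ioc a b, f m = ∑ m ∈ Ioc a b, g m) :
    Set.EqOn f g (Ioc a b) := by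
  have hconst : ∀ m, a + 1 ≤ m → m ≤ b → f m - g m = f (a + 1) - g (a + 1) := by
    intro m ham
    induction m, ham using Int.leInduction with
    | base => exact fun _ => rfl
    | succ m ham ih =>
      intro hmb
      rw [← ih (by omega), sub_eq_sub_iff_sub_eq_sub, hstep m (mem_Ioo.2 ⟨by omega, by omega⟩)]
  replace hconst : ∀ m ∈ Ioc a b, f m - g m = f (a + 1) - g (a + 1) := fun m hm =>
    hconst m (mem_Ioc.1 hm).1 (mem_Ioc.1 hm).2
  intro m hm
  have hcard : #(Ioc a b) ≠ 0 := card_ne_zero_of_mem hm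
  have hzero : #(Ioc a b) • (f (a + 1) - g (a + 1)) = 0 := by
    rw [← sum_const, ← sum_congr rfl hconst, sum_sub_distrib, hsum, sub_self]
  rw [← sub_eq_zero, hconst m hm, ← nsmul_eq_zero_iff_right hcard, hzero]

end Telescoping

theorem sum_Ioc_ite_le {R : Type*} [Ring R] {a b c : ℤ} (hac : a ≤ c) (hcb : c ≤ b) (x y : R) :
    ∑ ℓ ∈ Ioc a b, (if ℓ ≤ c then x else y) = (c - a : ℤ) * x + (b - c : ℤ) * y := by
  rw [← Ioc_union_Ioc_eq_Ioc hac hcb, sum_union (Ioc_disjoint_Ioc_of_le le_rfl),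
    sum_congr rfl fun ℓ hℓ => if_pos (mem_Ioc.1 hℓ).2,
    sum_congr rfl fun ℓ hℓ => if_neg (not_le.2 (mem_Ioc.1 hℓ).1), sum_const, sum_const,
    Int.card_Ioc, Int.card_Ioc, nsmul_eq_mul, nsmul_eq_mul, ← Int.cast_natCast,
    Int.toNat_of_nonneg (by omega), ← Int.cast_natCast, Int.toNat_of_nonneg (by omega)]

theorem sum_Ioc_du (ε : ℝ) (u : ℤ → ℝ) {a b : ℤ} (hab : a ≤ b) :
    ∑ ℓ ∈ Ioc a b, du ε u ℓ = (u b - u a) / ε := by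
  simp only [du, ← sum_div, sum_Ioc_sub_pred u hab]

theorem du_succ_sub_du {ε : ℝ} (hε : ε ≠ 0) (v : ℤ → ℝ) (j : ℤ) :
    du ε v (j + 1) - du ε v j = -ε * L1 ε v j := by
  simp only [du, L1, add_sub_cancel_right]
  field_simp
  ring

-- `α̃_{-K}(u')`, `α̃_K(u')` and `σ̄(u')` of the paper.
noncomputable def alphaMinus (K : ℕ) (ε : ℝ) (u : ℤ → ℝ) : ℝ :=
  du ε u (-(K : ℤ) + 1) - 2 * du ε u (-(K : ℤ)) + du ε u (-(K : ℤ) - 1)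

noncomputable def alphaPlus (K : ℕ) (ε : ℝ) (u : ℤ → ℝ) : ℝ :=
  du ε u ((K : ℤ) + 2) - 2 * du ε u ((K : ℤ) + 1) + du ε u (K : ℤ)

noncomputable def sigmaBar (K : ℕ) (ε φ2F : ℝ) (u : ℤ → ℝ) : ℝ :=
  ε / 2 * φ2F
    * (du ε u ((K : ℤ) + 1) - du ε u (K : ℤ) - du ε u (-(K : ℤ) + 1) + du ε u (-(K : ℤ)))

noncomputable def qcfStrain (K : ℕ) (ε φF φ2F : ℝ) (u : ℤ → ℝ) (ℓ : ℤ) : ℝ :=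
  sigmaQcf K ε φF φ2F u ℓ - sigmaBar K ε φ2F u
    + φ2F * (alphaMinus K ε u * hminus K ε ℓ - alphaPlus K ε u * hplus K ε ℓ)

section QCF

variable {K : ℕ} {ε : ℝ}

theorem hplus_succ_sub (m : ℤ) :
    hplus K ε (m + 1) - hplus K ε m = -(if m = K then 1 else 0) := by
  unfold hplus
  split_ifs <;> first | (exfalso; omega) | ring

theorem hminus_succ_sub (m : ℤ) :
    hminus K ε (m + 1) - hminus K ε m = -(if m = -K then 1 else 0) := by
  unfold hminus
  split_ifs <;> first | (exfalso; omega) | ring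

variable {φF φ2F : ℝ} {u : ℤ → ℝ}

theorem sigmaQcf_succ_sub (hK : 1 ≤ K) (hε : ε ≠ 0) (m : ℤ) :
    sigmaQcf K ε φF φ2F u (m + 1) - sigmaQcf K ε φF φ2F u m
      = -ε * Lqcf K ε φF φ2F u m + φ2F * alphaMinus K ε u * (if m = -K then 1 else 0)
        - φ2F * alphaPlus K ε u * (if m = K then 1 else 0) := by
  unfold sigmaQcf Lqcf alphaMinus alphaPlus
  simp only [abs_le]
  split_ifs <;> (try (exfalso; omega)) <;> (try subst m)
  all_goals
    simp only [du, La, L1]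
    field_simp
    ring_nf

theorem qcfStrain_succ_sub (hK : 1 ≤ K) (hε : ε ≠ 0) (m : ℤ) :
    qcfStrain K ε φF φ2F u (m + 1) - qcfStrain K ε φF φ2F u m = -ε * Lqcf K ε φF φ2F u m := by
  unfold qcfStrain
  linear_combination sigmaQcf_succ_sub (φF := φF) (φ2F := φ2F) (u := u) hK hε m
    + φ2F * alphaMinus K ε u * hminus_succ_sub (K := K) (ε := ε) m
    - φ2F * alphaPlus K ε u * hplus_succ_sub (K := K) (ε := ε) m

theorem sigmaQcf_eq_add_ite (ℓ : ℤ) :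
    sigmaQcf K ε φF φ2F u ℓ = (φF + 4 * φ2F) * du ε u ℓ
      + if ℓ ∈ Ioc (-(K : ℤ)) K then
          φ2F * ((du ε u (ℓ + 1) - du ε u ℓ) - (du ε u ℓ - du ε u (ℓ - 1)))
        else 0 := by
  unfold sigmaQcf
  simp only [mem_Ioc]
  split_ifs <;> first | (exfalso; omega) | ring

theorem sum_Ioc_sigmaQcf {a b : ℤ} (ha : a ≤ -K) (hb : K ≤ b) :
    ∑ ℓ ∈ Ioc a b, sigmaQcf K ε φF φ2F u ℓ = (φF + 4 * φ2F) * ((u b - u a) / ε)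
      + φ2F * ((du ε u (K + 1) - du ε u K) - (du ε u (-K + 1) - du ε u (-K))) := by
  have htele := sum_Ioc_sub_pred (fun ℓ => du ε u (ℓ + 1) - du ε u ℓ) (neg_le_self K.cast_nonneg)
  simp only [sub_add_cancel] at htele
  simp only [sigmaQcf_eq_add_ite, sum_add_distrib, ← mul_sum, sum_ite_mem,
    inter_eq_right.2 (Ioc_subset_Ioc ha hb), sum_Ioc_du ε u (by omega : a ≤ b), htele]

theorem sum_Ioc_qcfStrain {N : ℕ} (hKN : K ≤ N) (hεN : ε * N = 1) (hu₁ : u (-N) = 0)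
    (hu₂ : u N = 0) :
    ∑ ℓ ∈ Ioc (-(N : ℤ)) N, qcfStrain K ε φF φ2F u ℓ = 0 := by
  have hplus_sum : ∑ ℓ ∈ Ioc (-(N : ℤ)) N, hplus K ε ℓ = 0 := by
    unfold hplus
    rw [sum_Ioc_ite_le (by omega) (by omega)]
    push_cast
    linear_combination (-(K : ℝ)) * hεN
  have hminus_sum : ∑ ℓ ∈ Ioc (-(N : ℤ)) N, hminus K ε ℓ = 0 := by
    unfold hminus
    rw [sum_Ioc_ite_le (by omega) (by omega)]
    push_cast
    linear_combination (K : ℝ) * hεN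
  have hcard : (#(Ioc (-(N : ℤ)) N) : ℝ) = 2 * N := by
    rw [Int.card_Ioc, sub_neg_eq_add, ← Nat.cast_add, Int.toNat_natCast]
    push_cast
    ring
  simp only [qcfStrain, sum_add_distrib, sum_sub_distrib, sum_const, ← mul_sum, nsmul_eq_mul,
    hplus_sum, hminus_sum, hcard, hu₁, hu₂, sigmaBar,
    sum_Ioc_sigmaQcf (by omega : -(N : ℤ) ≤ -K) (by omega : (K : ℤ) ≤ N)]
  linear_combination (-φ2F * (du ε u ((K : ℤ) + 1) - du ε u (K : ℤ)
    - du ε u (-(K : ℤ) + 1) + du ε u (-(K : ℤ)))) * hεN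

end QCF

theorem qcf_inverse_laplacian_representation_general
    (N K : ℕ) (hK1 : 2 ≤ K) (hK2 : K + 2 ≤ N)
    (ε φF φ2F : ℝ) (hε : ε = 1 / N)
    (u z : ℤ → ℝ)
    (hu : ∀ j : ℤ, (N : ℤ) ≤ |j| → u j = 0)
    (hz : ∀ j : ℤ, (N : ℤ) ≤ |j| → z j = 0)
    (hLz : ∀ j ∈ Finset.Icc (-(N : ℤ) + 1) ((N : ℤ) - 1),
      L1 ε z j = Lqcf K ε φF φ2F u j) :
    ∀ ℓ ∈ Finset.Icc (-(N : ℤ) + 1) (N : ℤ),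
      du ε z ℓ = sigmaQcf K ε φF φ2F u ℓ
        - ε / 2 * φ2F * (du ε u ((K : ℤ) + 1) - du ε u (K : ℤ)
            - du ε u (-(K : ℤ) + 1) + du ε u (-(K : ℤ)))
        + φ2F * ((du ε u (-(K : ℤ) + 1) - 2 * du ε u (-(K : ℤ))
              + du ε u (-(K : ℤ) - 1)) * hminus K ε ℓ
            - (du ε u ((K : ℤ) + 2) - 2 * du ε u ((K : ℤ) + 1)
              + du ε u (K : ℤ)) * hplus K ε ℓ) := by
  have hN0 : (N : ℝ) ≠ 0 := by norm_cast; omega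
  have hε0 : ε ≠ 0 := hε ▸ one_div_ne_zero hN0
  have hεN : ε * N = 1 := by rw [hε, one_div_mul_cancel hN0]
  rw [Icc_add_one_sub_one_eq_Ioo] at hLz
  rw [Icc_add_one_left_eq_Ioc]
  show ∀ ℓ ∈ Ioc _ _, du ε z ℓ = qcfStrain K ε φF φ2F u ℓ
  refine eqOn_Ioc_of_succ_sub_eq_of_sum_eq (fun m hm => ?_) ?_
  · rw [du_succ_sub_du hε0, hLz m hm, qcfStrain_succ_sub (by omega) hε0]
  · rw [sum_Ioc_du ε z (by omega), hz N (by simp), hz (-N) (by simp), sub_self, zero_div,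
      sum_Ioc_qcfStrain (by omega) hεN (hu (-N) (by simp)) (hu N (by simp))]

/-- explicit representation of z' where z = (L¹)⁻¹ L^{qcf} u. -/
theorem qcf_inverse_laplacian_representation
    (N K : ℕ) (hN : 2 ≤ N) (hK1 : 2 ≤ K) (hK2 : K + 2 ≤ N)
    (ε φF φ2F : ℝ) (hε : ε = 1 / N)
    (u z : ℤ → ℝ)
    (hu : ∀ j : ℤ, (N : ℤ) ≤ |j| → u j = 0)
    (hz : ∀ j : ℤ, (N : ℤ) ≤ |j| → z j = 0)
    (hLz : ∀ j ∈ Finset.Icc (-(N : ℤ) + 1) ((N : ℤ) - 1),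
      L1 ε z j = Lqcf K ε φF φ2F u j) :
    ∀ ℓ ∈ Finset.Icc (-(N : ℤ) + 1) (N : ℤ),
      du ε z ℓ = sigmaQcf K ε φF φ2F u ℓ
        - ε / 2 * φ2F * (du ε u ((K : ℤ) + 1) - du ε u (K : ℤ)
            - du ε u (-(K : ℤ) + 1) + du ε u (-(K : ℤ)))
        + φ2F * ((du ε u (-(K : ℤ) + 1) - 2 * du ε u (-(K : ℤ))
              + du ε u (-(K : ℤ) - 1)) * hminus K ε ℓ
            - (du ε u ((K : ℤ) + 2) - 2 * du ε u ((K : ℤ) + 1)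
              + du ε u (K : ℤ)) * hplus K ε ℓ) :=
  qcf_inverse_laplacian_representation_general N K hK1 hK2 ε φF φ2F hε u z hu hz hLz
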